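/- arXiv:1512.06912 — 2 statements merged into one kernel-verified Lean document; each statement's English description precedes it below -/
import Mathlib

section
/- In a closed process system over a finite type U with initial configuration c₀ = (pos₀, D₀), let Reach denote the set of databases produced by executions from c₀ (so D₀ ∈ Reach, and D₀ ⊆ D for every D ∈ Reach). Let A be a type and let q : Finset U → Finset A be monotone with respect to inclusion. Then q D = q D₀ for every D ∈ Reach if and only if q D* = q D₀ for every D* that is a maximal element of Reach with respect to inclusion. -/
/-- A closed process system over a type `U` of facts. -/
structure ProcSys (U : Type) [DecidableEq U] where
  /-- places -/
  P : Type
  /-- transitions -/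
  T : Type
  [finP : Fintype P]
  [finT : Fintype T]
  src : T → P
  tgt : T → P
  /-- number of process instances -/
  k : ℕ
  /-- enabling predicate -/
  En : Fin k → T → Finset U → Prop
  /-- writing function -/
  Wr : Fin k → T → Finset U → Finset U

attribute [instance] ProcSys.finP ProcSys.finT

namespace ProcSys

variable {U : Type} [DecidableEq U]

/-- A configuration: positions of the instances together with a database. -/
abbrev Config (S : ProcSys U) : Type := (Fin S.k → S.P) × Finset U

/-- An allowed step by instance `i` via transition `t`. -/
def Step (S : ProcSys U) (i : Fin S.k) (t : S.T) (c c' : S.Config) : Prop :=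
  c.1 i = S.src t ∧ S.En i t c.2 ∧
    c' = (Function.update c.1 i (S.tgt t), c.2 ∪ S.Wr i t c.2)

/-- `f` (restricted to `0, …, n`) is an execution of length `n` from configuration `c`. -/
def IsExec (S : ProcSys U) (c : S.Config) (n : ℕ) (f : ℕ → S.Config) : Prop :=
  f 0 = c ∧ ∀ j < n, ∃ (i : Fin S.k) (t : S.T), S.Step i t (f j) (f (j + 1))

end ProcSys

/-- The database `D` is produced by some execution from configuration `c`. -/
def ProcSys.Produces {U : Type} [DecidableEq U] (S : ProcSys U) (c : S.Config)
    (D : Finset U) : Prop :=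
  ∃ (n : ℕ) (f : ℕ → S.Config), S.IsExec c n f ∧ (f n).2 = D

/- Every producible database `D` contains `D₀` and lies below a maximal producible `D*` (there are
only finitely many databases), so monotonicity squeezes `q D` between `q D₀` and `q D* = q D₀`. -/

theorem Monotone.forall_eq_iff_forall_maximal_eq {α β : Type*} [Preorder α] [Finite α]
    [PartialOrder β] {p : α → Prop} {f : α → β} (hf : Monotone f) {a : α}
    (ha : ∀ x, p x → a ≤ x) :
    (∀ x, p x → f x = f a) ↔ ∀ x, Maximal p x → f x = f a := by
  refine ⟨fun h x hx => h x hx.prop, fun h x hx => ?_⟩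
  obtain ⟨y, hxy, hy⟩ := Finite.exists_le_maximal hx
  exact le_antisymm ((hf hxy).trans (h y hy).le) (hf (ha x hx))

namespace ProcSys

variable {U : Type} [DecidableEq U] {S : ProcSys U}

theorem Step.db_subset {i : Fin S.k} {t : S.T} {c c' : S.Config} (h : S.Step i t c c') :
    c.2 ⊆ c'.2 := by
  rw [h.2.2]
  exact Finset.subset_union_left

theorem IsExec.db_subset {c : S.Config} {n : ℕ} {f : ℕ → S.Config} (h : S.IsExec c n f)
    {m : ℕ} (hm : m ≤ n) : c.2 ⊆ (f m).2 := by
  induction m with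
  | zero => rw [h.1]
  | succ j ih =>
    obtain ⟨i, t, hstep⟩ := h.2 j hm
    exact (ih (Nat.le_of_succ_le hm)).trans hstep.db_subset

theorem Produces.subset {c : S.Config} {D : Finset U} (h : S.Produces c D) : c.2 ⊆ D := by
  obtain ⟨n, f, hf, rfl⟩ := h
  exact hf.db_subset le_rfl

end ProcSys

theorem stable_iff_stable_on_maximal_general (U : Type) [Fintype U] [DecidableEq U]
    (S : ProcSys U) (pos₀ : Fin S.k → S.P) (D₀ : Finset U)
    (A : Type) (q : Finset U → Finset A)
    (hq : ∀ D E : Finset U, D ⊆ E → q D ⊆ q E) :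
    (∀ D : Finset U, S.Produces (pos₀, D₀) D → q D = q D₀) ↔
    (∀ Dstar : Finset U, S.Produces (pos₀, D₀) Dstar →
        (∀ D : Finset U, S.Produces (pos₀, D₀) D → Dstar ⊆ D → D = Dstar) →
        q Dstar = q D₀) := by
  have hmaximal : ∀ Dstar, Maximal (S.Produces (pos₀, D₀)) Dstar ↔
      S.Produces (pos₀, D₀) Dstar ∧
        ∀ D, S.Produces (pos₀, D₀) D → Dstar ⊆ D → D = Dstar := fun _ => by
    simp only [maximal_iff, eq_comm]
  rw [(show Monotone q from hq).forall_eq_iff_forall_maximal_eq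
    (a := D₀) fun D hD => ProcSys.Produces.subset hD]
  simp only [hmaximal, and_imp]

/-- a monotone query `q` is stable (returns `q D₀` on every producible
database) iff it returns `q D₀` on every ⊆-maximal producible database. -/
theorem stable_iff_stable_on_maximal (U : Type) [Fintype U] [DecidableEq U]
    (S : ProcSys U) (pos₀ : Fin S.k → S.P) (D₀ : Finset U)
    (A : Type) [DecidableEq A] (q : Finset U → Finset A)
    (hq : ∀ D E : Finset U, D ⊆ E → q D ⊆ q E) :
    (∀ D : Finset U, S.Produces (pos₀, D₀) D → q D = q D₀) ↔
    (∀ Dstar : Finset U, S.Produces (pos₀, D₀) Dstar →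
        (∀ D : Finset U, S.Produces (pos₀, D₀) D → Dstar ⊆ D → D = Dstar) →
        q Dstar = q D₀) :=
  stable_iff_stable_on_maximal_general U S pos₀ D₀ A q hq
end

section
/- Let a directed multigraph be given by a finite type P of vertices and a finite type T of edges with maps src, tgt : T → P, and write m = Fintype.card T. For every walk w from a vertex v there exists a walk w' from v of length at most m * (m + 1) that traverses exactly the same set of edges as w. -/
/-! A walk traverses an edge for the first time at no more than `m` indices, so one of the
`m + 1` blocks `[i * m, i * m + m)`, `i ≤ m`, contains no such index. If the walk is longer than
`m * (m + 1)`, two of the `m + 1` indices in `[i * m, i * m + m]` carry the same edge (pigeonhole);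
every edge strictly between them was already traversed before the block, so cutting out the
segment between them leaves a shorter walk with the same edge set. -/

/-- `w` (restricted to indices `< n`) is a walk of length `n` from `v` in the
directed multigraph given by `src` and `tgt`. -/
def IsWalk {P T : Type} (src tgt : T → P) (v : P) (n : ℕ) (w : ℕ → T) : Prop :=
  (0 < n → src (w 0) = v) ∧ ∀ j : ℕ, j + 1 < n → tgt (w j) = src (w (j + 1))

open Finset

theorem Finset.exists_le_card_disjoint_Ico (F : Finset ℕ) (k : ℕ) :
    ∃ i ≤ #F, Disjoint F (Ico (i * k) (i * k + k)) := by
  have hcard : #(F.image (· / k)) < #(range (#F + 1)) := by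
    simpa using Nat.lt_succ_of_le card_image_le
  obtain ⟨i, hi, hiF⟩ := exists_mem_notMem_of_card_lt_card hcard
  refine ⟨i, Nat.lt_succ_iff.mp (mem_range.mp hi), disjoint_left.mpr fun j hjF hj => hiF ?_⟩
  obtain ⟨hlo, hhi⟩ := mem_Ico.mp hj
  exact mem_image.mpr ⟨j, hjF, Nat.div_eq_of_lt_le hlo (by linarith)⟩

section Walk

variable {P T : Type} {src tgt : T → P} {v : P} {n : ℕ} {w : ℕ → T}

def cutOut (w : ℕ → T) (a d : ℕ) : ℕ → T := fun j => if j < a then w j else w (j + d)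

theorem isWalk_cutOut {a d : ℕ} (hw : IsWalk src tgt v n w) (hd : a + d ≤ n)
    (hsrc : a + d < n → src (w a) = src (w (a + d))) :
    IsWalk src tgt v (n - d) (cutOut w a d) := by
  refine ⟨fun hn => ?_, fun j hj => ?_⟩
  · by_cases ha : 0 < a
    · simpa [cutOut, ha] using hw.1 (by omega)
    · obtain rfl : a = 0 := by omega
      simp only [cutOut, lt_irrefl, if_false]
      rw [← hsrc (by omega)]
      exact hw.1 (by omega)
  · rcases lt_trichotomy (j + 1) a with hja | rfl | hja
    · simpa [cutOut, hja, show j < a by omega] using hw.2 j (by omega)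
    · simpa [cutOut, ← hsrc (by omega)] using hw.2 j (by omega)
    · simpa [cutOut, show ¬ j < a by omega, show ¬ j + 1 < a by omega,
        Nat.add_right_comm j 1 d] using hw.2 (j + d) (by omega)

theorem image_cutOut {a d : ℕ} (hd : a + d ≤ n)
    (hcov : ∀ j, a ≤ j → j < a + d → ∃ k < a, w k = w j) :
    cutOut w a d '' Set.Iio (n - d) = w '' Set.Iio n := by
  ext t
  simp only [Set.mem_image, Set.mem_Iio, cutOut]
  constructor
  · rintro ⟨j, hj, rfl⟩
    split_ifs with hja
    · exact ⟨j, by omega, rfl⟩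
    · exact ⟨j + d, by omega, rfl⟩
  · rintro ⟨j, hj, rfl⟩
    by_cases hja : j < a
    · exact ⟨j, by omega, if_pos hja⟩
    by_cases hjd : j < a + d
    · obtain ⟨k, hka, hk⟩ := hcov j (by omega) hjd
      exact ⟨k, by omega, by rw [if_pos hka, hk]⟩
    · exact ⟨j - d, by omega, by rw [if_neg (by omega), Nat.sub_add_cancel (by omega)]⟩

theorem IsWalk.exists_shorter_of_repeat {a b : ℕ} (hw : IsWalk src tgt v n w) (hab : a < b)
    (hbn : b < n) (hrep : w a = w b) (hcov : ∀ j, a ≤ j → j < b → ∃ k < a, w k = w j) :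
    ∃ n' < n, ∃ w', IsWalk src tgt v n' w' ∧ w' '' Set.Iio n' = w '' Set.Iio n := by
  obtain ⟨d, rfl⟩ := Nat.exists_eq_add_of_lt hab
  refine ⟨n - (d + 1), by omega, cutOut w a (d + 1), isWalk_cutOut hw (by omega) ?_,
    image_cutOut (by omega) (by simpa [← add_assoc] using hcov)⟩
  rw [← add_assoc, hrep]
  exact fun _ => rfl

def firstVisits [DecidableEq T] (w : ℕ → T) (n : ℕ) : Finset ℕ :=
  (range n).filter fun j => ∀ k < j, w k ≠ w j

theorem card_firstVisits_le [DecidableEq T] [Fintype T] :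
    #(firstVisits w n) ≤ Fintype.card T := by
  refine card_le_card_of_injOn w (fun _ _ => mem_univ _) fun i hi j hj hij => ?_
  simp only [firstVisits, mem_coe, mem_filter] at hi hj
  by_contra hne
  rcases Nat.lt_or_gt_of_ne hne with h | h
  · exact hj.2 i h hij
  · exact hi.2 j h hij.symm

theorem exists_mem_firstVisits [DecidableEq T] {j : ℕ} (hj : j < n) :
    ∃ k ∈ firstVisits w n, k ≤ j ∧ w k = w j := by
  have hex : ∃ k, w k = w j := ⟨j, rfl⟩
  have hle : Nat.find hex ≤ j := Nat.find_min' hex rfl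
  refine ⟨Nat.find hex, ?_, hle, Nat.find_spec hex⟩
  simp only [firstVisits, mem_filter, mem_range]
  exact ⟨by omega, fun k hk hkw => Nat.find_min hex hk (hkw.trans (Nat.find_spec hex))⟩

theorem IsWalk.exists_shorter [Fintype T] (hw : IsWalk src tgt v n w)
    (hn : Fintype.card T * (Fintype.card T + 1) < n) :
    ∃ n' < n, ∃ w', IsWalk src tgt v n' w' ∧ w' '' Set.Iio n' = w '' Set.Iio n := by
  classical
  set m := Fintype.card T
  obtain ⟨i, hi, hdisj⟩ := (firstVisits w n).exists_le_card_disjoint_Ico m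
  replace hi : i * m + m < n := by
    have := Nat.mul_le_mul_right m (hi.trans card_firstVisits_le)
    nlinarith
  set c := i * m
  have hcov : ∀ j, c ≤ j → j < c + m → ∃ k < c, w k = w j := by
    intro j hcj hjm
    obtain ⟨k, hkF, hkj, hk⟩ := exists_mem_firstVisits (w := w) (show j < n by omega)
    have : k ∉ Ico c (c + m) := disjoint_left.mp hdisj hkF
    exact ⟨k, by simp only [mem_Ico] at this; omega, hk⟩
  have hcard : #(univ : Finset T) < #(Icc c (c + m)) := by
    simp only [card_univ, Nat.card_Icc]
    omega
  obtain ⟨a, b, hab, ha, hb, hrep⟩ : ∃ a b, a < b ∧ c ≤ a ∧ b ≤ c + m ∧ w a = w b := by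
    obtain ⟨x, hx, y, hy, hne, hxy⟩ :=
      exists_ne_map_eq_of_card_lt_of_maps_to hcard (f := w) fun _ _ => mem_coe.mpr (mem_univ _)
    simp only [mem_Icc] at hx hy
    rcases Nat.lt_or_gt_of_ne hne with h | h
    · exact ⟨x, y, h, hx.1, hy.2, hxy⟩
    · exact ⟨y, x, h, hy.1, hx.2, hxy.symm⟩
  exact hw.exists_shorter_of_repeat hab (by omega) hrep fun j hj hjb =>
    (hcov j (by omega) (by omega)).imp fun k hk => ⟨by omega, hk.2⟩

end Walk

theorem walk_shorten_general (P T : Type) [Fintype T] (src tgt : T → P)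
    (v : P) (n : ℕ) (w : ℕ → T) (hw : IsWalk src tgt v n w) :
    ∃ (n' : ℕ) (w' : ℕ → T),
      n' ≤ Fintype.card T * (Fintype.card T + 1) ∧
      IsWalk src tgt v n' w' ∧
      {t : T | ∃ j < n', w' j = t} = {t : T | ∃ j < n, w j = t} := by
  induction n using Nat.strong_induction_on generalizing w with
  | _ n ih =>
  by_cases hn : n ≤ Fintype.card T * (Fintype.card T + 1)
  · exact ⟨n, w, hn, hw, rfl⟩
  obtain ⟨n', hn', w', hw', himage⟩ := hw.exists_shorter (not_le.mp hn)
  obtain ⟨n'', w'', hn'', hw'', htrav⟩ := ih n' hn' w' hw'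
  exact ⟨n'', w'', hn'', hw'', htrav.trans himage⟩

/-- every walk from `v` can be replaced by a walk from `v` of length
at most `m * (m + 1)` traversing exactly the same set of edges. -/
theorem walk_shorten (P T : Type) [Fintype P] [Fintype T] (src tgt : T → P)
    (v : P) (n : ℕ) (w : ℕ → T) (hw : IsWalk src tgt v n w) :
    ∃ (n' : ℕ) (w' : ℕ → T),
      n' ≤ Fintype.card T * (Fintype.card T + 1) ∧
      IsWalk src tgt v n' w' ∧
      {t : T | ∃ j < n', w' j = t} = {t : T | ∃ j < n, w j = t} :=
  walk_shorten_general P T src tgt v n w hw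
end
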